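/- Let (T, φ) be a quasi-Sturmian coloring and n > N₀. Suppose D is a colored n-ball distinct from A_n, B_n and S_n that is weakly adjacent to S_n. Then S_n and D are strongly adjacent. -/

import Mathlib

/-!
Since `b(n) = b(n-1) + 1` and restriction maps the classes of `n`-balls onto the classes of
`(n-1)`-balls, the fibre over `S_{n-1}`, which contains `A_n ≠ B_n`, is the only fibre with more
than one element: every other `(n-1)`-ball extends uniquely to an `n`-ball.

Let `v ∈ D` and `w ∈ S_n` be adjacent. A ball equivalence from `w` to any `x ∈ S_n` carries `v`
to a neighbour of `x` whose `(n-1)`-ball is that of `v`; since `D ≠ A_n, B_n`, this `(n-1)`-ball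
is not `S_{n-1}`, so the neighbour lies in `D`. Conversely, `D ≠ S_n` is not special, so `v` and
any `x ∈ D` have equivalent `(n+1)`-balls, and such an equivalence carries `w` to a neighbour of
`x` in `S_n`.
-/
open SimpleGraph

variable {V A : Type*}

/-- Equivalence of colored `n`-balls: a color-preserving isometry between the balls
of radius `n` centered at `u` and `v`, sending `u` to `v`. -/
def BallEquiv (G : SimpleGraph V) (φ : V → A) (n : ℕ) (u v : V) : Prop :=
  ∃ f : V → V, f u = v ∧
    (∀ x y : V, G.dist u x ≤ n → G.dist u y ≤ n → G.dist (f x) (f y) = G.dist x y) ∧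
    (∀ x : V, G.dist u x ≤ n → φ (f x) = φ x) ∧
    (∀ z : V, G.dist v z ≤ n → ∃ x : V, G.dist u x ≤ n ∧ f x = z)

/-- The factor complexity `b(n)`: the number of classes of colored `n`-balls. -/
noncomputable def complexity (G : SimpleGraph V) (φ : V → A) (n : ℕ) : ℕ :=
  Nat.card (Quot (BallEquiv G φ n))

/-- The colored `n`-ball at `u` is special: it admits two inequivalent `(n+1)`-extensions. -/
def IsSpecialCenter (G : SimpleGraph V) (φ : V → A) (n : ℕ) (u : V) : Prop :=
  ∃ v, BallEquiv G φ n u v ∧ ¬ BallEquiv G φ (n+1) u v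

/-- The type set `Λ_u` of a vertex. -/
def typeSet (G : SimpleGraph V) (φ : V → A) (u : V) : Set ℕ :=
  {n | IsSpecialCenter G φ n u}

/-- Two vertices are in the same class: their colored `n`-balls agree for all `n`. -/
def SameClass (G : SimpleGraph V) (φ : V → A) (u v : V) : Prop :=
  ∀ n, BallEquiv G φ n u v

/-- `m` is the maximal type of `u`. -/
def MaxType (G : SimpleGraph V) (φ : V → A) (u : V) (m : ℕ) : Prop :=
  m ∈ typeSet G φ u ∧ ∀ k ∈ typeSet G φ u, k ≤ m

/-- Weak adjacency of classes of colored `n`-balls (given by representatives `x`, `y`). -/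
def WeakAdj (G : SimpleGraph V) (φ : V → A) (n : ℕ) (x y : V) : Prop :=
  ∃ v w, G.Adj v w ∧ BallEquiv G φ n x v ∧ BallEquiv G φ n y w

/-- Strong adjacency: every ball of the class of `x` has a neighboring ball of the class of `y`. -/
def StrongAdj (G : SimpleGraph V) (φ : V → A) (n : ℕ) (x y : V) : Prop :=
  ∀ v, BallEquiv G φ n x v → ∃ w, G.Adj v w ∧ BallEquiv G φ n y w

/-- The factor graph `𝒢ₙ` on classes of colored `n`-balls. -/
def FactorGraph (G : SimpleGraph V) (φ : V → A) (n : ℕ) :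
    SimpleGraph (Quot (BallEquiv G φ n)) where
  Adj a b := a ≠ b ∧ ∃ u v, G.Adj u v ∧ Quot.mk _ u = a ∧ Quot.mk _ v = b
  symm := ⟨by rintro a b ⟨hne, u, v, h, hu, hv⟩; exact ⟨hne.symm, v, u, h.symm, hv, hu⟩⟩
  loopless := ⟨by rintro a ⟨hne, _⟩; exact hne rfl⟩

/-- The quotient graph `X = Γ\T` on classes of vertices. -/
def QuotGraph (G : SimpleGraph V) (φ : V → A) :
    SimpleGraph (Quot (SameClass G φ)) where
  Adj a b := a ≠ b ∧ ∃ u v, G.Adj u v ∧ Quot.mk _ u = a ∧ Quot.mk _ v = b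
  symm := ⟨by rintro a b ⟨hne, u, v, h, hu, hv⟩; exact ⟨hne.symm, v, u, h.symm, hv, hu⟩⟩
  loopless := ⟨by rintro a ⟨hne, _⟩; exact hne rfl⟩

namespace BallEquiv

variable {G : SimpleGraph V} {φ : V → A} {n : ℕ} {u v w : V}

protected lemma refl (n : ℕ) (u : V) : BallEquiv G φ n u u :=
  ⟨id, rfl, fun _ _ _ _ => rfl, fun _ _ => rfl, fun z hz => ⟨z, hz, rfl⟩⟩

protected lemma trans (h₁ : BallEquiv G φ n u v) (h₂ : BallEquiv G φ n v w) :
    BallEquiv G φ n u w := by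
  obtain ⟨f, rfl, hfd, hfc, hfs⟩ := h₁
  obtain ⟨g, rfl, hgd, hgc, hgs⟩ := h₂
  have hf : ∀ x, G.dist u x ≤ n → G.dist (f u) (f x) ≤ n := fun x hx =>
    (hfd u x (by simp) hx).trans_le hx
  refine ⟨g ∘ f, rfl, fun x y hx hy => ?_, fun x hx => ?_, fun z hz => ?_⟩
  · simp only [Function.comp, hgd _ _ (hf x hx) (hf y hy), hfd _ _ hx hy]
  · simp only [Function.comp, hgc _ (hf x hx), hfc _ hx]
  · obtain ⟨y, hy, rfl⟩ := hgs z hz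
    obtain ⟨x, hx, rfl⟩ := hfs y hy
    exact ⟨x, hx, rfl⟩

protected lemma symm (hG : G.Connected) (h : BallEquiv G φ n u v) : BallEquiv G φ n v u := by
  obtain ⟨f, rfl, hfd, hfc, hfs⟩ := h
  have : Nonempty V := ⟨u⟩
  have hu : G.dist u u ≤ n := by simp
  have hinj : Set.InjOn f {x | G.dist u x ≤ n} := fun x hx y hy hxy =>
    hG.dist_eq_zero_iff.mp (by rw [← hfd x y hx hy, hxy, dist_self])
  let g := Function.invFunOn f {x | G.dist u x ≤ n}
  have hg : ∀ z, G.dist (f u) z ≤ n → G.dist u (g z) ≤ n ∧ f (g z) = z := fun z hz =>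
    ⟨Function.invFunOn_mem (hfs z hz), Function.invFunOn_eq (hfs z hz)⟩
  refine ⟨g, hinj (hg _ (by simp)).1 hu (hg _ (by simp)).2, fun x y hx hy => ?_,
    fun x hx => ?_, fun z hz => ?_⟩
  · rw [← hfd _ _ (hg x hx).1 (hg y hy).1, (hg x hx).2, (hg y hy).2]
  · rw [← hfc _ (hg x hx).1, (hg x hx).2]
  · have hfz : G.dist (f u) (f z) ≤ n := (hfd u z hu hz).trans_le hz
    exact ⟨f z, hfz, hinj (hg _ hfz).1 hz (hg _ hfz).2⟩

lemma mono {m : ℕ} (hmn : m ≤ n) (h : BallEquiv G φ n u v) : BallEquiv G φ m u v := by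
  obtain ⟨f, rfl, hfd, hfc, hfs⟩ := h
  refine ⟨f, rfl, fun x y hx hy => hfd x y (hx.trans hmn) (hy.trans hmn),
    fun x hx => hfc x (hx.trans hmn), fun z hz => ?_⟩
  obtain ⟨x, hx, rfl⟩ := hfs z (hz.trans hmn)
  exact ⟨x, (hfd u x (by simp) hx).symm.trans_le hz, rfl⟩

lemma equivalence (hG : G.Connected) (n : ℕ) : Equivalence (BallEquiv G φ n) :=
  ⟨BallEquiv.refl n, fun h => h.symm hG, BallEquiv.trans⟩

lemma exists_adj_of_adj (hG : G.Connected) (h : BallEquiv G φ (n + 1) u v) (huw : G.Adj u w) :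
    ∃ w', G.Adj v w' ∧ BallEquiv G φ n w w' := by
  obtain ⟨f, rfl, hfd, hfc, hfs⟩ := h
  have hw : G.dist u w = 1 := dist_eq_one_iff_adj.mpr huw
  have hfw : G.dist (f u) (f w) = 1 := (hfd u w (by simp) (by omega)).trans hw
  have hball : ∀ x, G.dist w x ≤ n → G.dist u x ≤ n + 1 := fun x hx => by
    have := hG.dist_triangle (u := u) (v := w) (w := x)
    omega
  refine ⟨f w, dist_eq_one_iff_adj.mp hfw, f, rfl,
    fun x y hx hy => hfd x y (hball x hx) (hball y hy), fun x hx => hfc x (hball x hx),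
    fun z hz => ?_⟩
  have hz' : G.dist (f u) z ≤ n + 1 := by
    have := hG.dist_triangle (u := f u) (v := f w) (w := z)
    omega
  obtain ⟨x, hx, rfl⟩ := hfs z hz'
  exact ⟨x, (hfd w x (by omega) hx).symm.trans_le hz, rfl⟩

lemma succ_of_not_isSpecialCenter (hu : ¬ IsSpecialCenter G φ n u) (h : BallEquiv G φ n u v) :
    BallEquiv G φ (n + 1) u v := by
  by_contra h'
  exact hu ⟨v, h, h'⟩

end BallEquiv

theorem Function.Surjective.injOn_of_nat_card_le_succ {α β : Type*} [Finite α] {f : α → β}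
    (hf : Function.Surjective f) (hcard : Nat.card α ≤ Nat.card β + 1) {a b : α}
    (hne : a ≠ b) (hab : f a = f b) : Set.InjOn f {x | f x ≠ f a} := by
  have hb : ∀ x, f x ≠ f a → x ≠ b := by
    rintro x hx rfl
    exact hx hab.symm
  -- `f` stays surjective without `b`, so the cardinality bound makes it bijective there.
  let g : {x // x ≠ b} → β := fun x => f x
  have hg : Function.Surjective g := fun y => by
    obtain ⟨x, rfl⟩ := hf y
    by_cases hx : x = b
    · exact ⟨⟨a, hne⟩, hab.trans (congrArg f hx.symm)⟩
    · exact ⟨⟨x, hx⟩, rfl⟩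
  have hcard' : Nat.card {x // x ≠ b} ≤ Nat.card β := by
    have := Finite.card_subtype_lt (p := (· ≠ b)) (x := b) (by simp)
    omega
  intro x hx y hy hxy
  exact congrArg Subtype.val ((hg.bijective_of_nat_card_le hcard').injective
    (a₁ := ⟨x, hb x hx⟩) (a₂ := ⟨y, hb y hy⟩) hxy)

theorem ballEquiv_succ_of_complexity_succ {G : SimpleGraph V} {φ : V → A} {m : ℕ}
    (hG : G.Connected) (hcompl : complexity G φ (m + 1) = complexity G φ m + 1) {a b x y : V}
    (hab : BallEquiv G φ m a b) (hab' : ¬ BallEquiv G φ (m + 1) a b)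
    (hxy : BallEquiv G φ m x y) (hxa : ¬ BallEquiv G φ m x a) : BallEquiv G φ (m + 1) x y := by
  have : Finite (Quot (BallEquiv G φ (m + 1))) :=
    Nat.finite_of_card_ne_zero (by unfold complexity at hcompl; omega)
  have mk_eq (k : ℕ) := (BallEquiv.equivalence (φ := φ) hG k).quot_mk_eq_iff
  let π : Quot (BallEquiv G φ (m + 1)) → Quot (BallEquiv G φ m) :=
    Quot.map id fun _ _ => BallEquiv.mono m.le_succ
  have hπ : Function.Surjective π := Quot.ind fun x => ⟨Quot.mk _ x, rfl⟩
  have hxa' : π (Quot.mk _ x) ≠ π (Quot.mk _ a) := mt (mk_eq m x a).1 hxa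
  have hxy' : π (Quot.mk _ x) = π (Quot.mk _ y) := (mk_eq m x y).2 hxy
  have hya' : π (Quot.mk _ y) ≠ π (Quot.mk _ a) := hxy' ▸ hxa'
  exact (mk_eq (m + 1) x y).1 <| hπ.injOn_of_nat_card_le_succ hcompl.le
    (mt (mk_eq (m + 1) a b).1 hab') ((mk_eq m a b).2 hab) hxa' hya' hxy'

theorem special_strongly_adjacent_general {V A : Type*} (G : SimpleGraph V) (φ : V → A)
    (htree : G.IsTree)
    (N₀ c : ℕ) (hQS : ∀ m, N₀ ≤ m → complexity G φ m = m + c)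
    (n : ℕ) (hn : N₀ < n)
    -- `s` represents the unique special ball `S_n`
    (s : V)
    (hsu : ∀ x : V, IsSpecialCenter G φ n x → BallEquiv G φ n s x)
    -- `s'` represents the special ball `S_{n-1}`, with `a`, `b` its two extensions `A_n`, `B_n`
    (s' : V)
    (a b : V) (ha : BallEquiv G φ (n - 1) a s') (hb : BallEquiv G φ (n - 1) b s')
    (hab : ¬ BallEquiv G φ n a b)
    (honly : ∀ x : V, BallEquiv G φ (n - 1) x s' → BallEquiv G φ n x a ∨ BallEquiv G φ n x b)
    -- `D`, represented by `e`, is distinct from `A_n`, `B_n`, `S_n` and weakly adjacent to `S_n`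
    (e : V) (hea : ¬ BallEquiv G φ n e a) (heb : ¬ BallEquiv G φ n e b)
    (hes : ¬ BallEquiv G φ n e s)
    (hweak : WeakAdj G φ n e s) :
    StrongAdj G φ n s e ∧ StrongAdj G φ n e s := by
  have hG : G.Connected := htree.connected
  obtain ⟨m, rfl⟩ : ∃ m, n = m + 1 := ⟨n - 1, by omega⟩
  simp only [Nat.add_sub_cancel] at ha hb honly
  have he : ¬ BallEquiv G φ m e a := fun h => (honly e (h.trans ha)).elim hea heb
  have hcompl : complexity G φ (m + 1) = complexity G φ m + 1 := by
    rw [hQS _ hn.le, hQS m (by omega)]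
    omega
  have hunique (y : V) (hy : BallEquiv G φ m e y) : BallEquiv G φ (m + 1) e y :=
    ballEquiv_succ_of_complexity_succ hG hcompl (ha.trans (hb.symm hG)) hab hy he
  obtain ⟨v, w, hvw, hev, hsw⟩ := hweak
  refine ⟨fun x hsx => ?_, fun x hex => ?_⟩
  · obtain ⟨v', hxv', hvv'⟩ := ((hsw.symm hG).trans hsx).exists_adj_of_adj hG hvw.symm
    exact ⟨v', hxv', hunique v' ((hev.mono m.le_succ).trans hvv')⟩
  · have hv : ¬ IsSpecialCenter G φ (m + 1) v := fun h =>
      hes (hev.trans ((hsu v h).symm hG))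
    obtain ⟨w', hxw', hww'⟩ :=
      (BallEquiv.succ_of_not_isSpecialCenter hv ((hev.symm hG).trans hex)).exists_adj_of_adj hG hvw
    exact ⟨w', hxw', hsw.trans hww'⟩

/-- For a quasi-Sturmian coloring and `n > N₀`: if a colored `n`-ball `D` distinct from
`A_n`, `B_n`, `S_n` is weakly adjacent to the special ball `S_n`, then `S_n` and `D` are
strongly adjacent. -/
theorem special_strongly_adjacent {V A : Type*} (G : SimpleGraph V) [G.LocallyFinite]
    (φ : V → A) [Finite A] (dg : ℕ) (hd : 2 ≤ dg)
    (htree : G.IsTree) (hreg : ∀ v : V, G.degree v = dg)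
    (hsurj : Function.Surjective φ)
    (N₀ c : ℕ) (hQS : ∀ m, N₀ ≤ m → complexity G φ m = m + c)
    (n : ℕ) (hn : N₀ < n)
    -- `s` represents the unique special ball `S_n`
    (s : V) (hs : IsSpecialCenter G φ n s)
    (hsu : ∀ x : V, IsSpecialCenter G φ n x → BallEquiv G φ n s x)
    -- `s'` represents the special ball `S_{n-1}`, with `a`, `b` its two extensions `A_n`, `B_n`
    (s' : V) (hs' : IsSpecialCenter G φ (n - 1) s')
    (a b : V) (ha : BallEquiv G φ (n - 1) a s') (hb : BallEquiv G φ (n - 1) b s')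
    (hab : ¬ BallEquiv G φ n a b)
    (honly : ∀ x : V, BallEquiv G φ (n - 1) x s' → BallEquiv G φ n x a ∨ BallEquiv G φ n x b)
    -- `D`, represented by `e`, is distinct from `A_n`, `B_n`, `S_n` and weakly adjacent to `S_n`
    (e : V) (hea : ¬ BallEquiv G φ n e a) (heb : ¬ BallEquiv G φ n e b)
    (hes : ¬ BallEquiv G φ n e s)
    (hweak : WeakAdj G φ n e s) :
    StrongAdj G φ n s e ∧ StrongAdj G φ n e s :=
  special_strongly_adjacent_general G φ htree N₀ c hQS n hn s hsu s' a b ha hb hab honly e hea heb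
    hes hweak
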